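/- In Mozes's numbers game on a Dynkin diagram with standard Cartan matrix (where only vertices with negative amplitude may be fired), the game is strongly convergent: if from a configuration v ∈ ℝ^I some sequence of legal moves terminates (reaching a configuration with all amplitudes nonnegative), then every maximal sequence of legal moves terminates, in the same number of moves, at the same final configuration. -/

import Mathlib

open scoped BigOperators

/-- One move of Mozes's numbers game: firing vertex `i` replaces the configuration `v` by
`f_i(v)` with `f_i(v)_j = v_j - c_{ij} v_i`. -/
def fire {I : Type*} (C : Matrix I I ℤ) (v : I → ℝ) (i : I) : I → ℝ :=
  fun j => v j - (C i j : ℝ) * v i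

/-- The result of the firing sequence `l` from configuration `v`. -/
def ngRes {I : Type*} (C : Matrix I I ℤ) (v : I → ℝ) (l : List I) : I → ℝ :=
  l.foldl (fire C) v

/-- Legality of a firing sequence: only vertices with negative amplitude may be fired. -/
def NGLegal {I : Type*} (C : Matrix I I ℤ) : (I → ℝ) → List I → Prop
  | _, [] => True
  | v, i :: t => v i < 0 ∧ NGLegal C (fire C v i) t

/-!
Eriksson's argument. `C` has the polygon property if, whenever two vertices `i`, `j` of a
configuration are negative, firing `i` first and firing `j` first can be continued by legal
moves to a common configuration after the same number of moves. For such `C`, a diamond-lemma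
induction on the length of a terminating game shows that every legal game extends to it with the
same total length. The finite-type hypothesis enters only through rank two: positive
definiteness forces `C i j * C j i < 4`, leaving the types `A₁ × A₁`, `A₂`, `B₂`, `G₂`, where the
two alternating words of length `2, 3, 4, 6` are legal and agree by direct computation.
-/

section NumbersGame

variable {I : Type*}

section Sequences

variable (C : Matrix I I ℤ)

lemma ngRes_cons (v : I → ℝ) (i : I) (l : List I) :
    ngRes C v (i :: l) = ngRes C (fire C v i) l := rfl

lemma ngRes_append (v : I → ℝ) (l₁ l₂ : List I) :
    ngRes C v (l₁ ++ l₂) = ngRes C (ngRes C v l₁) l₂ :=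
  List.foldl_append

lemma ngLegal_append (v : I → ℝ) (l₁ l₂ : List I) :
    NGLegal C v (l₁ ++ l₂) ↔ NGLegal C v l₁ ∧ NGLegal C (ngRes C v l₁) l₂ := by
  induction l₁ generalizing v with
  | nil => simp [NGLegal, ngRes]
  | cons i t ih => simp only [List.cons_append, NGLegal, ih, ngRes_cons, and_assoc]

lemma eq_nil_of_ngLegal_of_nonneg {v : I → ℝ} {l : List I} (hl : NGLegal C v l)
    (hv : ∀ i, 0 ≤ v i) : l = [] := by
  cases l with
  | nil => rfl
  | cons i _ => exact absurd hl.1 (hv i).not_gt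

end Sequences

section Polygon

variable (C : Matrix I I ℤ)

def PolygonAt (v : I → ℝ) (i j : I) : Prop :=
  ∃ p q : List I, NGLegal C v (i :: p) ∧ NGLegal C v (j :: q) ∧
    ngRes C v (i :: p) = ngRes C v (j :: q) ∧ p.length = q.length

/-- Eriksson's polygon property. -/
def PolygonProperty : Prop :=
  ∀ (v : I → ℝ) (i j : I), v i < 0 → v j < 0 → PolygonAt C v i j

variable {C}

lemma PolygonAt.symm {v : I → ℝ} {i j : I} (h : PolygonAt C v i j) : PolygonAt C v j i :=
  let ⟨p, q, hp, hq, hres, hlen⟩ := h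
  ⟨q, p, hq, hp, hres.symm, hlen.symm⟩

lemma polygonAt_self {v : I → ℝ} {i : I} (hi : v i < 0) : PolygonAt C v i i :=
  ⟨[], [], ⟨hi, trivial⟩, ⟨hi, trivial⟩, rfl, rfl⟩

theorem exists_completion_of_polygonProperty (hC : PolygonProperty C) (n : ℕ) :
    ∀ (v : I → ℝ) (l : List I), l.length = n → NGLegal C v l → (∀ i, 0 ≤ ngRes C v l i) →
      ∀ l' : List I, NGLegal C v l' → ∃ r : List I, NGLegal C (ngRes C v l') r ∧
        ngRes C v (l' ++ r) = ngRes C v l ∧ l'.length + r.length = n := by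
  induction n with
  | zero =>
    intro v l hlen hl hterm l' hl'
    obtain rfl : l = [] := List.length_eq_zero_iff.mp hlen
    obtain rfl : l' = [] := eq_nil_of_ngLegal_of_nonneg C hl' hterm
    exact ⟨[], trivial, rfl, rfl⟩
  | succ n ih =>
    intro v l hlen hl hterm l' hl'
    obtain ⟨i, t, rfl⟩ := List.exists_cons_of_length_eq_add_one hlen
    obtain ⟨hi, ht⟩ := hl
    cases l' with
    | nil => exact ⟨i :: t, ⟨hi, ht⟩, rfl, by simpa using hlen⟩
    | cons j t' =>
      obtain ⟨hj, ht'⟩ := hl'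
      obtain ⟨p, q, ⟨-, hp⟩, ⟨-, hq⟩, hpq, hlen_pq⟩ := hC v i j hi hj
      have htlen : t.length = n := by simpa using hlen
      obtain ⟨r₁, hr₁, hres₁, hlen₁⟩ := ih _ t htlen ht hterm p hp
      -- `q ++ r₁` is a second terminating game from `fire C v j`, to which `ih` applies.
      have hqr₁ : NGLegal C (fire C v j) (q ++ r₁) :=
        (ngLegal_append C _ _ _).2 ⟨hq, by rwa [← ngRes_cons, ← hpq]⟩
      have hres_qr₁ : ngRes C (fire C v j) (q ++ r₁) = ngRes C (fire C v i) t := by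
        rw [ngRes_append, ← ngRes_cons, ← hpq, ngRes_cons, ← ngRes_append, hres₁]
      obtain ⟨r, hr, hres, hlen_r⟩ := ih _ (q ++ r₁) (by simp; omega) hqr₁
        (hres_qr₁ ▸ hterm) t' ht'
      exact ⟨r, hr, hres.trans hres_qr₁, by simp; omega⟩

end Polygon

lemma pair_cases_of_mul_lt_four {a b : ℤ} (ha : a ≤ 0) (hb : b ≤ 0) (hzero : a = 0 ↔ b = 0)
    (hlt : a * b < 4) :
    (a = 0 ∧ b = 0) ∨ (a = -1 ∧ b = -1) ∨ (a = -1 ∧ b = -2) ∨ (a = -2 ∧ b = -1) ∨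
      (a = -1 ∧ b = -3) ∨ (a = -3 ∧ b = -1) := by
  rcases ha.lt_or_eq with ha' | ha'
  · have hb' : b < 0 := hb.lt_of_ne (mt hzero.2 ha'.ne)
    have : -3 ≤ a := by nlinarith
    have : -3 ≤ b := by nlinarith
    interval_cases a <;> interval_cases b <;> omega
  · exact .inl ⟨ha', hzero.1 ha'⟩

section RankTwo

def altWord (i j : I) : ℕ → List I
  | 0 => []
  | n + 1 => i :: altWord j i n

lemma length_altWord (i j : I) (n : ℕ) : (altWord i j n).length = n := by
  induction n generalizing i j with
  | zero => rfl
  | succ n ih => simp [altWord, ih]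

variable {C : Matrix I I ℤ} {v : I → ℝ} {i j : I}

lemma polygonAt_of_altWord {m : ℕ} (hij : NGLegal C v (altWord i j (m + 1)))
    (hji : NGLegal C v (altWord j i (m + 1)))
    (hres : ngRes C v (altWord i j (m + 1)) = ngRes C v (altWord j i (m + 1))) :
    PolygonAt C v i j :=
  ⟨altWord j i m, altWord i j m, hij, hji, hres, by simp [length_altWord]⟩

/-- The rank-two types `A₁ × A₁`, `A₂`, `B₂`, `G₂`; `m` is the order of `sᵢ sⱼ`. -/
lemma polygonAt_of_finiteType (hii : C i i = 2) (hjj : C j j = 2) (hi : v i < 0) (hj : v j < 0)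
    (m : ℕ) (hm : (C i j = 0 ∧ C j i = 0 ∧ m = 2) ∨ (C i j = -1 ∧ C j i = -1 ∧ m = 3) ∨
      (C i j = -1 ∧ C j i = -2 ∧ m = 4) ∨ (C i j = -1 ∧ C j i = -3 ∧ m = 6)) :
    PolygonAt C v i j := by
  refine polygonAt_of_altWord (m := m - 1) ?_ ?_ ?_ <;>
  rcases hm with ⟨ha, hb, rfl⟩ | ⟨ha, hb, rfl⟩ | ⟨ha, hb, rfl⟩ | ⟨ha, hb, rfl⟩ <;>
  simp only [Nat.reduceSub, altWord, NGLegal, ngRes, List.foldl, and_true] <;>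
  first
  | (funext k; simp only [fire, hii, hjj, ha, hb]; push_cast; ring)
  | (simp only [fire, hii, hjj, ha, hb]; push_cast; and_intros <;> linarith)

lemma polygonAt_of_mul_lt_four (hii : C i i = 2) (hjj : C j j = 2) (hij : C i j ≤ 0)
    (hji : C j i ≤ 0) (hzero : C i j = 0 ↔ C j i = 0) (hlt : C i j * C j i < 4)
    (hi : v i < 0) (hj : v j < 0) : PolygonAt C v i j := by
  rcases pair_cases_of_mul_lt_four hij hji hzero hlt with
    ⟨ha, hb⟩ | ⟨ha, hb⟩ | ⟨ha, hb⟩ | ⟨ha, hb⟩ | ⟨ha, hb⟩ | ⟨ha, hb⟩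
  · exact polygonAt_of_finiteType hii hjj hi hj 2 (.inl ⟨ha, hb, rfl⟩)
  · exact polygonAt_of_finiteType hii hjj hi hj 3 (.inr (.inl ⟨ha, hb, rfl⟩))
  · exact polygonAt_of_finiteType hii hjj hi hj 4 (.inr (.inr (.inl ⟨ha, hb, rfl⟩)))
  · exact (polygonAt_of_finiteType hjj hii hj hi 4 (.inr (.inr (.inl ⟨hb, ha, rfl⟩)))).symm
  · exact polygonAt_of_finiteType hii hjj hi hj 6 (.inr (.inr (.inr ⟨ha, hb, rfl⟩)))
  · exact (polygonAt_of_finiteType hjj hii hj hi 6 (.inr (.inr (.inr ⟨hb, ha, rfl⟩)))).symm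

end RankTwo

lemma mul_entry_lt_four_of_posDef [Fintype I] {C : Matrix I I ℤ} {d : I → ℝ} {i j : I}
    (hii : C i i = 2) (hjj : C j j = 2) (hdj : 0 < d j)
    (hpos : ∀ w : I → ℝ, w ≠ 0 → 0 < ∑ i, ∑ j, d i * (C i j : ℝ) * w i * w j)
    (hij : i ≠ j) : C i j * C j i < 4 := by
  classical
  -- The form takes the value `d j * (8 - 2 * C i j * C j i)` at `C i j • eᵢ - 2 • eⱼ`.
  set w : I → ℝ := fun k => if k = i then (C i j : ℝ) else if k = j then -2 else 0
  have hw : ∀ k, k ≠ i ∧ k ≠ j → w k = 0 := fun k hk => by simp [w, hk.1, hk.2]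
  have hwi : w i = C i j := if_pos rfl
  have hwj : w j = -2 := by simp [w, hij.symm]
  have hQ := hpos w fun h => by simpa [hwj] using congrFun h j
  rw [Fintype.sum_eq_add i j hij fun k hk => by simp [hw k hk]] at hQ
  rw [Fintype.sum_eq_add i j hij fun k hk => by simp [hw k hk],
    Fintype.sum_eq_add i j hij fun k hk => by simp [hw k hk]] at hQ
  rw [hwi, hwj, hii, hjj] at hQ
  have hQ' : 0 < d j * (4 - ((C i j * C j i : ℤ) : ℝ)) := by push_cast at hQ ⊢; linarith
  exact_mod_cast sub_pos.1 ((pos_iff_pos_of_mul_pos hQ').1 hdj)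

lemma polygonProperty_of_posDef [Fintype I] {C : Matrix I I ℤ} (hdiag : ∀ i, C i i = 2)
    (hoff : ∀ i j, i ≠ j → C i j ≤ 0) (hzero : ∀ i j, C i j = 0 ↔ C j i = 0) {d : I → ℝ}
    (hd : ∀ i, 0 < d i)
    (hpos : ∀ w : I → ℝ, w ≠ 0 → 0 < ∑ i, ∑ j, d i * (C i j : ℝ) * w i * w j) :
    PolygonProperty C := by
  intro v i j hi hj
  rcases eq_or_ne i j with rfl | hij
  · exact polygonAt_self hi
  · exact polygonAt_of_mul_lt_four (hdiag i) (hdiag j) (hoff i j hij) (hoff j i hij.symm)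
      (hzero i j) (mul_entry_lt_four_of_posDef (hdiag i) (hdiag j) (hd j) hpos hij) hi hj

end NumbersGame

/-- For the standard Cartan matrix of a Dynkin diagram (integral, diagonal `2`,
nonpositive off-diagonal entries vanishing symmetrically, and symmetrizable with positive
definite symmetrization, i.e. of finite type), the numbers game is strongly convergent: if
some legal sequence from `v` terminates (all amplitudes nonnegative), then every legal
sequence has length at most that of the terminating one, and every terminating legal
sequence has the same length and the same final configuration. -/
theorem stmt6 {I : Type*} [Fintype I] (C : Matrix I I ℤ)
    (hdiag : ∀ i, C i i = 2)
    (hoff : ∀ i j, i ≠ j → C i j ≤ 0)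
    (hzero : ∀ i j, C i j = 0 ↔ C j i = 0)
    (hfin : ∃ d : I → ℝ, (∀ i, 0 < d i) ∧ (∀ i j, d i * C i j = d j * C j i) ∧
      ∀ w : I → ℝ, w ≠ 0 → 0 < ∑ i, ∑ j, d i * (C i j : ℝ) * w i * w j)
    (v : I → ℝ) (l : List I) (hl : NGLegal C v l) (hterm : ∀ i, 0 ≤ ngRes C v l i) :
    ∀ l' : List I, NGLegal C v l' →
      l'.length ≤ l.length ∧
      ((∀ i, 0 ≤ ngRes C v l' i) →
        ngRes C v l' = ngRes C v l ∧ l'.length = l.length) := by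
  obtain ⟨d, hd, -, hpos⟩ := hfin
  intro l' hl'
  obtain ⟨r, hr, hres, hlen⟩ := exists_completion_of_polygonProperty
    (polygonProperty_of_posDef hdiag hoff hzero hd hpos) _ v l rfl hl hterm l' hl'
  refine ⟨by omega, fun hterm' => ?_⟩
  obtain rfl := eq_nil_of_ngLegal_of_nonneg C hr hterm'
  exact ⟨by simpa using hres, by simpa using hlen⟩
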